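/- The cover pebbling ratio of the d-dimensional hypercube Q^d equals (3/2)^d; equivalently, writing n = 2^d for the number of vertices of Q^d, the ratio γ(Q^d)/π(Q^d) equals n^{log₂3 − 1}. -/

import Mathlib

open Finset

/-- A pebbling step on graph `G`: remove two pebbles from a vertex `u`,
place one pebble on an adjacent vertex `v`. -/
def PebbleStep {V : Type*} (G : SimpleGraph V) (C C' : V → ℕ) : Prop :=
  ∃ u v : V, G.Adj u v ∧ 2 ≤ C u ∧ C' u = C u - 2 ∧ C' v = C v + 1 ∧
    ∀ x : V, x ≠ u → x ≠ v → C' x = C x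

/-- A configuration is coverable if after some sequence of pebbling steps
every vertex has at least one pebble. -/
def Coverable {V : Type*} (G : SimpleGraph V) (C : V → ℕ) : Prop :=
  ∃ C' : V → ℕ, Relation.ReflTransGen (PebbleStep G) C C' ∧ ∀ v : V, 1 ≤ C' v

/-- The `d`-dimensional hypercube: vertices are binary `d`-tuples, adjacent
exactly when they differ in one coordinate. -/
def cube (d : ℕ) : SimpleGraph (Fin d → Bool) where
  Adj x y := hammingDist x y = 1
  symm := ⟨fun x y h => (hammingDist_comm y x).trans h⟩
  loopless := ⟨fun x h => by simp [hammingDist_self] at h⟩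

/-- The cover pebbling number: the minimum `m` such that every configuration
of size `m` on `G` is coverable. -/
noncomputable def coverPebblingNumber {V : Type*} [Fintype V] (G : SimpleGraph V) : ℕ :=
  sInf {m : ℕ | ∀ C : V → ℕ, (∑ v, C v) = m → Coverable G C}

/-- The pebbling number: the minimum `m` such that from every configuration of
size `m` and for every target vertex, some sequence of pebbling steps places a
pebble on the target. -/
noncomputable def pebblingNumber {V : Type*} [Fintype V] (G : SimpleGraph V) : ℕ :=
  sInf {m : ℕ | ∀ (C : V → ℕ) (t : V), (∑ v, C v) = m →
    ∃ C' : V → ℕ, Relation.ReflTransGen (PebbleStep G) C C' ∧ 1 ≤ C' t}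

/-
Both numbers are computed by induction on `d`, viewing `Q^(d+1)` as two copies of `Q^d`
joined by a perfect matching; a configuration on `Q^(d+1)` is a pair of configurations on the
halves, and moves inside a half or across the matching are moves of `Q^(d+1)`.

Upper bounds. For `π(Q^d) ≤ 2^d` one proves Chung's stronger two-pebbling statement
simultaneously: `2^(d+1) + 2 ≤ |C| + q(C)` pebbles, `q(C)` the number of odd vertices, put two
pebbles on any target. To reach a target in one half, pebble pairs are shipped from the other
half across the matching until the target half holds `2^d` pebbles, or the other half pebbles
the twin of the target twice. For `γ(Q^d) ≤ 3^d` one carries along the number of surplus pairs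
left after covering: the richer half is covered first and pays the poorer half up to `3^d`
pebbles out of its surplus.

Lower bounds. If `w v ≤ 2 w u` along every edge `uv`, the weight `∑ C x * w x` never increases.
With all `m` pebbles on `u` and `w y = 2^(dist y u)` the initial weight is `m`, while covering
requires weight `∑ y, 2^(dist y u) = 3^d` and reaching the antipode of `u` weight `2^d`.
-/

open Relation

namespace Pebbling

section General

variable {V W : Type*} {G : SimpleGraph V} {H : SimpleGraph W}

theorem sum_mul_le_of_pebbleStep [Fintype V] {w : V → ℕ}
    (hw : ∀ u v, G.Adj u v → w v ≤ 2 * w u)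
    {C C' : V → ℕ} (h : PebbleStep G C C') : ∑ x, C' x * w x ≤ ∑ x, C x * w x := by
  classical
  obtain ⟨u, v, huv, hu2, hu, hv, hrest⟩ := h
  have hpoint : ∀ x, C' x * w x + (if x = u then 2 * w u else 0) =
      C x * w x + (if x = v then w v else 0) := by
    intro x
    by_cases hxu : x = u
    · subst hxu
      rw [if_pos rfl, if_neg huv.ne, hu, Nat.sub_mul]
      have := Nat.mul_le_mul_right (w x) hu2
      omega
    by_cases hxv : x = v
    · subst hxv
      rw [if_neg hxu, if_pos rfl, hv]
      ring
    · rw [if_neg hxu, if_neg hxv, hrest x hxu hxv]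
  have hsum := Finset.sum_congr rfl fun x (_ : x ∈ univ) => hpoint x
  simp only [Finset.sum_add_distrib, Finset.sum_ite_eq', Finset.mem_univ, if_true] at hsum
  linarith [hw u v huv]

theorem sum_mul_le_of_reflTransGen [Fintype V] {w : V → ℕ}
    (hw : ∀ u v, G.Adj u v → w v ≤ 2 * w u) {C C' : V → ℕ}
    (h : ReflTransGen (PebbleStep G) C C') : ∑ x, C' x * w x ≤ ∑ x, C x * w x := by
  induction h with
  | refl => exact le_rfl
  | tail _ step ih => exact (sum_mul_le_of_pebbleStep hw step).trans ih

theorem pebbleStep_extend {f : V → W} (hf : Function.Injective f)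
    (hadj : ∀ {a b}, G.Adj a b → H.Adj (f a) (f b)) {C C' : V → ℕ} (h : PebbleStep G C C')
    (E : W → ℕ) : PebbleStep H (Function.extend f C E) (Function.extend f C' E) := by
  obtain ⟨u, v, huv, hu2, hu, hv, hrest⟩ := h
  refine ⟨f u, f v, hadj huv, ?_, ?_, ?_, fun y hyu hyv => ?_⟩
  · rwa [hf.extend_apply]
  · rw [hf.extend_apply, hf.extend_apply, hu]
  · rw [hf.extend_apply, hf.extend_apply, hv]
  by_cases hy : ∃ x, f x = y
  · obtain ⟨x, rfl⟩ := hy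
    simp only [hf.extend_apply]
    exact hrest x (fun h => hyu (h ▸ rfl)) (fun h => hyv (h ▸ rfl))
  · simp only [Function.extend_apply' _ _ _ hy]

theorem exists_le_sum_eq {ι : Type*} [Fintype ι] [DecidableEq ι] {b : ι → ℕ} :
    ∀ {k : ℕ}, k ≤ ∑ i, b i → ∃ a ≤ b, ∑ i, a i = k
  | 0, _ => ⟨0, fun _ => Nat.zero_le _, by simp⟩
  | k + 1, hk => by
    obtain ⟨a, hab, ha⟩ := exists_le_sum_eq (b := b) (k := k) (by omega)
    obtain ⟨i, -, hi⟩ := Finset.exists_lt_of_sum_lt (ha ▸ hk : ∑ i, a i < ∑ i, b i)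
    refine ⟨a + Pi.single i 1, fun j => ?_, ?_⟩
    · by_cases hj : j = i
      · subst hj
        simpa using hi
      · simpa [hj] using hab j
    · simp [Finset.sum_add_distrib, ha]

end General

section Counting

variable {V : Type*} [Fintype V]

def numOdd (C : V → ℕ) : ℕ := ∑ v, C v % 2

def surplus (C : V → ℕ) : ℕ := ∑ v, (C v - 1) / 2

theorem sum_eq_two_mul_add_numOdd (C : V → ℕ) : ∑ v, C v = 2 * ∑ v, C v / 2 + numOdd C := by
  rw [numOdd, Finset.mul_sum, ← Finset.sum_add_distrib]
  exact Finset.sum_congr rfl fun v _ => (Nat.div_add_mod (C v) 2).symm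

theorem numOdd_le_sum (C : V → ℕ) : numOdd C ≤ ∑ v, C v :=
  Finset.sum_le_sum fun _ _ => Nat.mod_le _ _

theorem numOdd_le_card (C : V → ℕ) : numOdd C ≤ Fintype.card V := by
  rw [Fintype.card_eq_sum_ones]
  exact Finset.sum_le_sum fun _ _ => Nat.le_of_lt_succ (Nat.mod_lt _ two_pos)

variable {a B : V → ℕ}

theorem exists_two_smul_le_sum_eq [DecidableEq V] {k : ℕ} (hk : k ≤ ∑ v, B v / 2) :
    ∃ a, 2 • a ≤ B ∧ ∑ v, a v = k := by
  obtain ⟨a, hab, ha⟩ := exists_le_sum_eq hk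
  refine ⟨a, fun v => show 2 * a v ≤ B v from ?_, ha⟩
  have : a v ≤ B v / 2 := hab v
  omega

theorem sum_sub_two_smul_add (h : 2 • a ≤ B) :
    ∑ v, (B - 2 • a) v + 2 * ∑ v, a v = ∑ v, B v := by
  rw [Finset.mul_sum, ← Finset.sum_add_distrib]
  exact Finset.sum_congr rfl fun v _ => Nat.sub_add_cancel (h v)

theorem numOdd_sub_two_smul (h : 2 • a ≤ B) : numOdd (B - 2 • a) = numOdd B := by
  refine Finset.sum_congr rfl fun v _ => ?_
  have : 2 * a v ≤ B v := h v
  simp only [Pi.sub_apply, Pi.smul_apply, smul_eq_mul]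
  omega

theorem surplus_sub_two_smul_add (h : 2 • a ≤ B - 1) :
    surplus (B - 2 • a) + ∑ v, a v = surplus B := by
  rw [surplus, surplus, ← Finset.sum_add_distrib]
  refine Finset.sum_congr rfl fun v _ => ?_
  have : 2 * a v ≤ B v - 1 := h v
  simp only [Pi.sub_apply, Pi.smul_apply, smul_eq_mul]
  omega

end Counting

section Halves

variable {d : ℕ}

theorem hammingDist_cons {n : ℕ} (a b : Bool) (x y : Fin n → Bool) :
    hammingDist (Fin.cons a x : Fin (n + 1) → Bool) (Fin.cons b y) =
      (if a = b then 0 else 1) + hammingDist x y := by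
  simp only [hammingDist, Finset.card_filter, Fin.sum_univ_succ, Fin.cons_zero, Fin.cons_succ,
    ite_not]

theorem cube_adj_cons_iff (c : Bool) (x y : Fin d → Bool) :
    (cube (d + 1)).Adj (Fin.cons c x) (Fin.cons c y) ↔ (cube d).Adj x y := by
  simp [cube, hammingDist_cons]

theorem cube_adj_cons_not (c : Bool) (x : Fin d → Bool) :
    (cube (d + 1)).Adj (Fin.cons c x) (Fin.cons (!c) x) := by
  simp [cube, hammingDist_cons]

def glue (c : Bool) (A B : (Fin d → Bool) → ℕ) : (Fin (d + 1) → Bool) → ℕ :=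
  fun y => if y 0 = c then A (Fin.tail y) else B (Fin.tail y)

variable {c : Bool} {A A' B B' : (Fin d → Bool) → ℕ}

@[simp]
theorem glue_cons_self (x : Fin d → Bool) : glue c A B (Fin.cons c x) = A x := by
  simp [glue]

@[simp]
theorem glue_cons_not (x : Fin d → Bool) : glue c A B (Fin.cons (!c) x) = B x := by
  simp [glue]

theorem glue_not : glue (!c) B A = glue c A B := by
  funext y
  cases h : y 0 <;> cases c <;> simp [glue, h]

theorem exists_glue_eq (c : Bool) (C : (Fin (d + 1) → Bool) → ℕ) :
    ∃ A B, glue c A B = C := by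
  refine ⟨fun x => C (Fin.cons c x), fun x => C (Fin.cons (!c) x), funext fun y => ?_⟩
  rw [← Fin.cons_self_tail y]
  cases y 0 <;> cases c <;> simp [glue]

theorem one_le_glue (hA : ∀ x, 1 ≤ A x) (hB : ∀ x, 1 ≤ B x) (y : Fin (d + 1) → Bool) :
    1 ≤ glue c A B y := by
  unfold glue
  split_ifs
  exacts [hA _, hB _]

theorem sum_comp_glue {M : Type*} [AddCommMonoid M] (g : ℕ → M) :
    ∑ y, g (glue c A B y) = ∑ x, g (A x) + ∑ x, g (B x) := by
  rw [← (Fin.consEquiv fun _ => Bool).sum_comp, Fintype.sum_prod_type, Fintype.sum_bool]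
  cases c <;> simp [Fin.consEquiv, glue, add_comm]

theorem sum_glue : ∑ y, glue c A B y = ∑ x, A x + ∑ x, B x :=
  sum_comp_glue id

theorem numOdd_glue : numOdd (glue c A B) = numOdd A + numOdd B :=
  sum_comp_glue (· % 2)

theorem surplus_glue : surplus (glue c A B) = surplus A + surplus B :=
  sum_comp_glue fun n => (n - 1) / 2

theorem extend_cons_glue : Function.extend (Fin.cons c) A' (glue c A B) = glue c A' B := by
  funext y
  rw [← Fin.cons_self_tail y]
  by_cases h : y 0 = c
  · rw [h, (Fin.cons_right_injective (α := fun _ => Bool) c).extend_apply, glue_cons_self]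
  · have hy : y 0 = !c := by cases c <;> simpa using h
    rw [hy, Function.extend_apply', glue_cons_not, glue_cons_not]
    rintro ⟨x, hx⟩
    simpa using congrFun hx 0

theorem reflTransGen_glue_left (h : ReflTransGen (PebbleStep (cube d)) A A') :
    ReflTransGen (PebbleStep (cube (d + 1))) (glue c A B) (glue c A' B) := by
  refine h.lift (fun A => glue c A B) fun A₁ A₂ step => ?_
  simpa only [extend_cons_glue] using pebbleStep_extend
    (Fin.cons_right_injective (α := fun _ => Bool) c)
    (cube_adj_cons_iff c _ _).2 step (glue c A B)

theorem reflTransGen_glue_right (h : ReflTransGen (PebbleStep (cube d)) B B') :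
    ReflTransGen (PebbleStep (cube (d + 1))) (glue c A B) (glue c A B') := by
  simpa only [glue_not] using reflTransGen_glue_left (c := !c) (B := A) h

theorem pebbleStep_glue_cross {x : Fin d → Bool} (h : 2 ≤ B x) :
    PebbleStep (cube (d + 1)) (glue c A B)
      (glue c (A + Pi.single x 1) (B - 2 • Pi.single x 1)) := by
  refine ⟨Fin.cons (!c) x, Fin.cons c x, (cube_adj_cons_not c x).symm, by simpa, by simp,
    by simp, fun y hyu hyv => ?_⟩
  rw [← Fin.cons_self_tail y] at hyu hyv ⊢
  cases hy : y 0 <;> cases c <;> simp_all [glue]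

theorem reflTransGen_glue_transfer {a : (Fin d → Bool) → ℕ} (h : 2 • a ≤ B) :
    ReflTransGen (PebbleStep (cube (d + 1))) (glue c A B) (glue c (A + a) (B - 2 • a)) := by
  induction hn : ∑ x, a x generalizing a with
  | zero =>
    obtain rfl : a = 0 := funext fun x => Finset.sum_eq_zero_iff.1 hn x (mem_univ x)
    simpa using ReflTransGen.refl
  | succ n ih =>
    obtain ⟨x, hx⟩ : ∃ x, a x ≠ 0 := by
      by_contra! h0
      simp [h0] at hn
    obtain ⟨a, rfl⟩ : ∃ a' : (Fin d → Bool) → ℕ, a = a' + Pi.single x 1 := by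
      refine ⟨a - Pi.single x 1, funext fun y => ?_⟩
      by_cases hy : y = x
      · subst hy
        simp only [Pi.add_apply, Pi.sub_apply, Pi.single_eq_same]
        omega
      · simp [hy]
    have hax : 2 * (a x + 1) ≤ B x := by simpa using h x
    refine (ih ((nsmul_le_nsmul_right le_self_add 2).trans h)
      (by simpa [Finset.sum_add_distrib] using hn)).tail ?_
    rw [← add_assoc, smul_add, tsub_add_eq_tsub_tsub]
    exact pebbleStep_glue_cross (by
      simp only [nsmul_eq_mul, Nat.cast_ofNat, Pi.sub_apply, Pi.mul_apply, Pi.ofNat_apply]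
      omega)

end Halves

section Chung

variable {V : Type*}

def Solvable (G : SimpleGraph V) (C : V → ℕ) (t : V) (j : ℕ) : Prop :=
  ∃ C', ReflTransGen (PebbleStep G) C C' ∧ j ≤ C' t

variable {d : ℕ} {c : Bool} {A B : (Fin d → Bool) → ℕ}

theorem solvable_one_glue
    (h₁ : ∀ (C : (Fin d → Bool) → ℕ) t, 2 ^ d ≤ ∑ x, C x → Solvable (cube d) C t 1)
    (h₂ : ∀ (C : (Fin d → Bool) → ℕ) t,
      2 ^ (d + 1) + 2 ≤ ∑ x, C x + numOdd C → Solvable (cube d) C t 2)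
    (t : Fin d → Bool) (h : 2 ^ (d + 1) ≤ ∑ x, A x + ∑ x, B x) :
    Solvable (cube (d + 1)) (glue c A B) (Fin.cons c t) 1 := by
  have hB := sum_eq_two_mul_add_numOdd B
  have hpow : 2 ^ (d + 1) = 2 * 2 ^ d := pow_succ' 2 d
  by_cases hodd : numOdd B ≤ ∑ x, A x
  · obtain ⟨a, h2a, ha⟩ :=
      exists_two_smul_le_sum_eq (B := B) (k := 2 ^ d - ∑ x, A x) (by omega)
    obtain ⟨A', hA', hA't⟩ := h₁ (A + a) t (by
      simp only [Pi.add_apply, Finset.sum_add_distrib]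
      omega)
    exact ⟨_, (reflTransGen_glue_transfer h2a).trans (reflTransGen_glue_left hA'), by simpa⟩
  · obtain ⟨B', hB', hB't⟩ := h₂ B t (by omega)
    exact ⟨_, (reflTransGen_glue_right hB').tail (pebbleStep_glue_cross hB't), by simp⟩

theorem solvable_two_glue
    (h₁ : ∀ (C : (Fin d → Bool) → ℕ) t, 2 ^ d ≤ ∑ x, C x → Solvable (cube d) C t 1)
    (h₂ : ∀ (C : (Fin d → Bool) → ℕ) t,
      2 ^ (d + 1) + 2 ≤ ∑ x, C x + numOdd C → Solvable (cube d) C t 2)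
    (t : Fin d → Bool) (h : 2 ^ (d + 2) + 2 ≤ ∑ x, A x + ∑ x, B x + (numOdd A + numOdd B)) :
    Solvable (cube (d + 1)) (glue c A B) (Fin.cons c t) 2 := by
  by_cases hA : 2 ^ (d + 1) + 2 ≤ ∑ x, A x + numOdd A
  · obtain ⟨A', hA', hA't⟩ := h₂ A t hA
    exact ⟨_, reflTransGen_glue_left hA', by simpa⟩
  have hB := sum_eq_two_mul_add_numOdd B
  have hoddA := numOdd_le_sum A
  have hoddB : numOdd B ≤ 2 ^ d := by simpa using numOdd_le_card B
  have hpow : 2 ^ (d + 1) = 2 * 2 ^ d := pow_succ' 2 d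
  have hpow' : 2 ^ (d + 2) = 4 * 2 ^ d := by ring
  obtain ⟨a, h2a, ha⟩ := exists_two_smul_le_sum_eq (B := B) (k := 2 ^ d - ∑ x, A x) (by omega)
  obtain ⟨A', hA', hA't⟩ := h₁ (A + a) t (by
    simp only [Pi.add_apply, Finset.sum_add_distrib]
    omega)
  have hsub := sum_sub_two_smul_add h2a
  obtain ⟨B', hB', hB't⟩ := h₂ (B - 2 • a) t (by rw [numOdd_sub_two_smul h2a]; omega)
  refine ⟨_, (((reflTransGen_glue_transfer h2a).trans (reflTransGen_glue_left hA')).trans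
    (reflTransGen_glue_right hB')).tail (pebbleStep_glue_cross hB't), ?_⟩
  simp only [glue_cons_self, Pi.add_apply, Pi.single_eq_same]
  omega

theorem cube_solvable (d : ℕ) :
    (∀ (C : (Fin d → Bool) → ℕ) t, 2 ^ d ≤ ∑ x, C x → Solvable (cube d) C t 1) ∧
    (∀ (C : (Fin d → Bool) → ℕ) t,
      2 ^ (d + 1) + 2 ≤ ∑ x, C x + numOdd C → Solvable (cube d) C t 2) := by
  induction d with
  | zero =>
    have hsum (C : (Fin 0 → Bool) → ℕ) (t : Fin 0 → Bool) : ∑ x, C x = C t :=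
      Fintype.sum_subsingleton _ t
    refine ⟨fun C t h => ⟨C, .refl, by rw [hsum C t] at h; simpa using h⟩,
      fun C t h => ⟨C, .refl, ?_⟩⟩
    have : numOdd C = C t % 2 := hsum (fun x => C x % 2) t
    simp only [hsum C t, this, zero_add, pow_one] at h
    omega
  | succ d ih =>
    refine ⟨fun C t h => ?_, fun C t h => ?_⟩
    · obtain ⟨c, t, rfl⟩ : ∃ c t', Fin.cons c t' = t := ⟨_, _, Fin.cons_self_tail t⟩
      obtain ⟨A, B, rfl⟩ := exists_glue_eq c C
      rw [sum_glue] at h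
      exact solvable_one_glue ih.1 ih.2 t h
    · obtain ⟨c, t, rfl⟩ : ∃ c t', Fin.cons c t' = t := ⟨_, _, Fin.cons_self_tail t⟩
      obtain ⟨A, B, rfl⟩ := exists_glue_eq c C
      rw [sum_glue, numOdd_glue] at h
      exact solvable_two_glue ih.1 ih.2 t h

end Chung

section Cover

variable {V : Type*} [Fintype V]

def CoverableWithSurplus (G : SimpleGraph V) (C : V → ℕ) (k : ℕ) : Prop :=
  ∃ C', ReflTransGen (PebbleStep G) C C' ∧ (∀ v, 1 ≤ C' v) ∧ k ≤ surplus C'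

variable {d : ℕ} {c : Bool} {A B : (Fin d → Bool) → ℕ}

theorem coverableWithSurplus_glue
    (ih : ∀ (C : (Fin d → Bool) → ℕ) k, 3 ^ d + 2 * k ≤ ∑ x, C x →
      CoverableWithSurplus (cube d) C k)
    {k : ℕ} (hAB : ∑ x, A x ≤ ∑ x, B x)
    (h : 3 ^ (d + 1) + 2 * k ≤ ∑ x, A x + ∑ x, B x) :
    CoverableWithSurplus (cube (d + 1)) (glue c A B) k := by
  have hpow : 3 ^ (d + 1) = 3 * 3 ^ d := pow_succ' 3 d
  have hpos : 0 < 3 ^ d := by positivity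
  -- `B` pays `k'` pebbles to bring `A` up to `3^d`; `A` then leaves `kA` surplus pairs.
  set kA := min k ((∑ x, A x - 3 ^ d) / 2)
  set k' := 3 ^ d - ∑ x, A x
  obtain ⟨B₁, hB₁, hcovB₁, hsB₁⟩ := ih B (k - kA + k') (by omega)
  obtain ⟨a, h2a, ha⟩ := exists_two_smul_le_sum_eq (B := B₁ - 1) (k := k')
    (by simp only [Pi.sub_apply, Pi.one_apply]; rw [← surplus]; omega)
  obtain ⟨A₂, hA₂, hcovA₂, hsA₂⟩ := ih (A + a) kA (by
    simp only [Pi.add_apply, Finset.sum_add_distrib]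
    omega)
  have hcovB₂ (x) : 1 ≤ (B₁ - 2 • a) x := by
    have : 2 * a x ≤ B₁ x - 1 := h2a x
    have := hcovB₁ x
    simp only [Pi.sub_apply, Pi.smul_apply, smul_eq_mul]
    omega
  have hsB₂ := surplus_sub_two_smul_add h2a
  refine ⟨glue c A₂ (B₁ - 2 • a), ((reflTransGen_glue_right hB₁).trans
    (reflTransGen_glue_transfer (h2a.trans tsub_le_self))).trans (reflTransGen_glue_left hA₂),
    one_le_glue hcovA₂ hcovB₂, ?_⟩
  rw [surplus_glue]
  omega

theorem cube_coverableWithSurplus (d : ℕ) :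
    ∀ (C : (Fin d → Bool) → ℕ) k, 3 ^ d + 2 * k ≤ ∑ x, C x →
      CoverableWithSurplus (cube d) C k := by
  induction d with
  | zero =>
    intro C k h
    have hsum (f : (Fin 0 → Bool) → ℕ) (v) : ∑ x, f x = f v := Fintype.sum_subsingleton f v
    refine ⟨C, .refl, fun v => ?_, ?_⟩
    · rw [hsum C v] at h
      omega
    · rw [hsum C default] at h
      rw [surplus, hsum _ default]
      omega
  | succ d ih =>
    intro C k h
    obtain ⟨A, B, rfl⟩ := exists_glue_eq false C
    rw [sum_glue] at h
    rcases le_total (∑ x, A x) (∑ x, B x) with hAB | hBA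
    · exact coverableWithSurplus_glue ih hAB h
    · rw [← glue_not]
      exact coverableWithSurplus_glue ih hBA (by omega)

end Cover

section LowerBound

variable {d m : ℕ}

theorem sum_two_pow_hammingDist (u : Fin d → Bool) : ∑ y, 2 ^ hammingDist y u = 3 ^ d := by
  have hprod (y : Fin d → Bool) : 2 ^ hammingDist y u = ∏ i, if y i = u i then 1 else 2 := by
    rw [Finset.prod_ite, Finset.prod_const_one, one_mul, Finset.prod_const]
    rfl
  simp_rw [hprod]
  rw [← Fintype.prod_sum (fun i (b : Bool) => if b = u i then 1 else 2), ← Fin.prod_const d 3]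
  refine Finset.prod_congr rfl fun i _ => ?_
  cases u i <;> simp

theorem sum_mul_two_pow_hammingDist_le {u : Fin d → Bool} {C : (Fin d → Bool) → ℕ}
    (h : ReflTransGen (PebbleStep (cube d)) (Pi.single u m) C) :
    ∑ y, C y * 2 ^ hammingDist y u ≤ m := by
  have hw : ∀ a b, (cube d).Adj a b → 2 ^ hammingDist b u ≤ 2 * 2 ^ hammingDist a u := by
    intro a b hab
    rw [← pow_succ']
    refine Nat.pow_le_pow_right two_pos ?_
    have hba : hammingDist b a = 1 := (hammingDist_comm b a).trans hab
    have := hammingDist_triangle b a u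
    omega
  simpa [Pi.single_apply] using sum_mul_le_of_reflTransGen hw h

theorem not_coverable_single (hm : m < 3 ^ d) (u : Fin d → Bool) :
    ¬ Coverable (cube d) (Pi.single u m) := by
  rintro ⟨C, hC, hcov⟩
  have : 3 ^ d ≤ ∑ y, C y * 2 ^ hammingDist y u := by
    rw [← sum_two_pow_hammingDist u]
    exact Finset.sum_le_sum fun y _ => Nat.le_mul_of_pos_left _ (hcov y)
  have := sum_mul_two_pow_hammingDist_le hC
  omega

theorem not_solvable_single (hm : m < 2 ^ d) (u : Fin d → Bool) :
    ¬ Solvable (cube d) (Pi.single u m) (fun i => !u i) 1 := by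
  rintro ⟨C, hC, ht⟩
  have hdist : hammingDist (fun i => !u i) u = d := by
    simp [hammingDist]
  have : 2 ^ d ≤ ∑ y, C y * 2 ^ hammingDist y u :=
    calc 2 ^ d = 2 ^ hammingDist (fun i => !u i) u := by rw [hdist]
      _ ≤ _ := (Nat.le_mul_of_pos_left _ ht).trans
        (Finset.single_le_sum (f := fun y => C y * 2 ^ hammingDist y u)
          (fun _ _ => Nat.zero_le _) (Finset.mem_univ _))
  have := sum_mul_two_pow_hammingDist_le hC
  omega

end LowerBound

theorem pebblingNumber_cube (d : ℕ) : pebblingNumber (cube d) = 2 ^ d := by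
  refine IsLeast.csInf_eq ⟨fun C t h => (cube_solvable d).1 C t h.ge, fun m hm => ?_⟩
  by_contra! hlt
  exact not_solvable_single hlt (fun _ => false) (hm _ _ (by simp))

theorem coverPebblingNumber_cube (d : ℕ) : coverPebblingNumber (cube d) = 3 ^ d := by
  refine IsLeast.csInf_eq ⟨fun C h => ?_, fun m hm => ?_⟩
  · obtain ⟨C', hC', hcov, -⟩ := cube_coverableWithSurplus d C 0 (by omega)
    exact ⟨C', hC', hcov⟩
  · by_contra! hlt
    exact not_coverable_single hlt (fun _ => false) (hm _ (by simp))

end Pebbling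

/-- The cover pebbling ratio of the `d`-cube equals `(3/2)^d`; equivalently,
writing `n = 2^d` for the number of vertices of `Q^d`, the ratio
`γ(Q^d)/π(Q^d)` equals `n^(log₂ 3 − 1)`. -/
theorem cover_pebbling_ratio_cube (d : ℕ) :
    ((coverPebblingNumber (cube d) : ℝ) / (pebblingNumber (cube d) : ℝ)
        = ((3 : ℝ) / 2) ^ d) ∧
    ((3 : ℝ) / 2) ^ d = ((2 : ℝ) ^ d) ^ (Real.logb 2 3 - 1) := by
  constructor
  · rw [Pebbling.coverPebblingNumber_cube, Pebbling.pebblingNumber_cube]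
    push_cast
    rw [← div_pow]
  · have h32 : (3 : ℝ) / 2 = 2 ^ (Real.logb 2 3 - 1) := by
      rw [Real.rpow_sub two_pos, Real.rpow_logb two_pos (by norm_num) (by norm_num),
        Real.rpow_one]
    rw [h32, ← Real.rpow_natCast, ← Real.rpow_natCast (2 : ℝ) d,
      ← Real.rpow_mul zero_le_two, ← Real.rpow_mul zero_le_two, mul_comm]
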